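/- arXiv:2204.00432 — 6 statements merged into one kernel-verified Lean document; each statement's English description precedes it below -/
import Mathlib

section
/- For every positive integer n, if we write (x+i)^n = R_n(x) + i·Q_n(x) with R_n, Q_n ∈ ℤ[x], then R_n(x) = (x²+1)^{n/2} · T_n(x/√(x²+1)) for all real x, where T_n is the n-th Chebyshev polynomial of the first kind. -/
/-- For every positive integer `n`, the real part `R_n(x)` of `(x+i)^n` equals
`(x²+1)^(n/2) · T_n(x/√(x²+1))`, where `T_n` is the `n`-th Chebyshev polynomial of the
first kind. -/
theorem stmt_0 (n : ℕ) (hn : 0 < n) (x : ℝ) :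
    (((x : ℂ) + Complex.I) ^ n).re =
      (x ^ 2 + 1) ^ ((n : ℝ) / 2) *
        (Polynomial.Chebyshev.T ℝ n).eval (x / Real.sqrt (x ^ 2 + 1)) := by
  have h1 : (0:ℝ) < x ^ 2 + 1 := by positivity
  set r := Real.sqrt (x ^ 2 + 1) with hrdef
  have hr : 0 < r := Real.sqrt_pos.mpr h1
  have hr2 : r ^ 2 = x ^ 2 + 1 := Real.sq_sqrt h1.le
  set θ := Real.arccos (x / r) with hθ
  have hb : |x / r| ≤ 1 := by
    rw [abs_div, abs_of_pos hr, div_le_one hr]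
    nlinarith [abs_nonneg x, sq_abs x]
  have hcos : Real.cos θ = x / r :=
    Real.cos_arccos (abs_le.mp hb).1 (abs_le.mp hb).2
  have hsin : Real.sin θ = 1 / r := by
    rw [hθ, Real.sin_arccos]
    rw [div_pow, hr2, show 1 - x^2/(x^2+1) = (x^2+1)⁻¹ by field_simp; ring]
    rw [Real.sqrt_inv, one_div, hrdef]
  have key : (x : ℂ) + Complex.I = (r : ℂ) * Complex.exp (θ * Complex.I) := by
    have hrne : (r:ℂ) ≠ 0 := by exact_mod_cast hr.ne'
    rw [Complex.exp_mul_I, ← Complex.ofReal_cos, ← Complex.ofReal_sin, hcos, hsin]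
    push_cast
    field_simp
  rw [key, mul_pow, ← Complex.exp_nat_mul]
  have hre : ((r : ℂ) ^ n * Complex.exp (n * (θ * Complex.I))).re
      = r ^ n * Real.cos (n * θ) := by
    rw [show (n : ℂ) * (θ * Complex.I) = ((n * θ : ℝ) : ℂ) * Complex.I by push_cast; ring,
      Complex.exp_mul_I, ← Complex.ofReal_cos, ← Complex.ofReal_sin, ← Complex.ofReal_pow]
    simp only [← Complex.ofReal_natCast, ← Complex.ofReal_mul, ← Complex.ofReal_pow,
      ← Complex.ofReal_cos, ← Complex.ofReal_sin, Complex.add_re, Complex.mul_re,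
      Complex.mul_im, Complex.ofReal_re, Complex.ofReal_im, Complex.I_re, Complex.I_im]
    ring
  rw [hre, ← hcos, Polynomial.Chebyshev.T_real_cos θ n]
  have hrp : (x ^ 2 + 1) ^ ((n : ℝ) / 2) = r ^ n := by
    rw [hrdef, Real.sqrt_eq_rpow, ← Real.rpow_natCast ((x^2+1) ^ ((1:ℝ)/2)) n,
      ← Real.rpow_mul h1.le]
    congr 1
    ring
  rw [hrp]
  push_cast
  ring
end

section
/- For every positive integer n, the polynomial R_n(x) = Re((x+i)^n) has exactly n distinct real roots, and exactly n − 2·⌊n/3 + 1/2⌋ of them lie in the open interval (−1/√3, 1/√3). -/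
open Real Set

namespace Stmt2Aux

noncomputable def f (n k : ℕ) : ℝ := Real.tan (π/2 - (2*k+1)*π/(2*n))

lemma phi_mem {n : ℕ} (hn : 0 < n) {k : ℕ} (hk : k < n) :
    π/2 - (2*(k:ℝ)+1)*π/(2*n) ∈ Set.Ioo (-(π/2)) (π/2) := by
  have hπ := Real.pi_pos
  have hN : (0:ℝ) < 2*n := by positivity
  constructor
  · have h1 : (2*(k:ℝ)+1)*π/(2*n) < π := by
      rw [div_lt_iff₀ hN]
      have h2 : (2*(k:ℝ)+1) < 2*n := by exact_mod_cast (by omega : 2*k+1 < 2*n)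
      nlinarith
    linarith
  · have h2 : 0 < (2*(k:ℝ)+1)*π/(2*n) := by positivity
    linarith

lemma re_eq (n : ℕ) {φ : ℝ} (hφ : φ ∈ Set.Ioo (-(π/2)) (π/2)) :
    ((((Real.tan φ : ℝ) : ℂ) + Complex.I)^n).re
      = ((Real.cos φ)⁻¹)^n * Real.cos (n * (π/2 - φ)) := by
  have hc : 0 < Real.cos φ := Real.cos_pos_of_mem_Ioo hφ
  have key : ((Real.tan φ : ℝ) : ℂ) + Complex.I
      = (((Real.cos φ)⁻¹ : ℝ) : ℂ) * Complex.exp ((π/2 - φ : ℝ) * Complex.I) := by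
    apply Complex.ext
    · simp only [Complex.add_re, Complex.ofReal_re, Complex.I_re,
        Complex.re_ofReal_mul, Complex.exp_ofReal_mul_I_re, Real.cos_pi_div_two_sub]
      rw [Real.tan_eq_sin_div_cos]; ring
    · simp only [Complex.add_im, Complex.ofReal_im, Complex.I_im,
        Complex.im_ofReal_mul, Complex.exp_ofReal_mul_I_im, Real.sin_pi_div_two_sub]
      field_simp
      norm_num
  rw [key, mul_pow, ← Complex.ofReal_pow, ← Complex.exp_nat_mul]
  have : ((n:ℂ)) * ((π/2 - φ : ℝ) * Complex.I) = ((n * (π/2 - φ) : ℝ) : ℂ) * Complex.I := by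
    push_cast; ring
  rw [this, Complex.re_ofReal_mul, Complex.exp_ofReal_mul_I_re]

lemma mem_iff {n : ℕ} (hn : 0 < n) (x : ℝ) :
    (((x : ℂ) + Complex.I) ^ n).re = 0 ↔ ∃ k < n, x = f n k := by
  have hπ := Real.pi_pos
  have hN : (0:ℝ) < 2*n := by positivity
  constructor
  · intro hx
    set φ := Real.arctan x with hφdef
    have hφ : φ ∈ Set.Ioo (-(π/2)) (π/2) := Real.arctan_mem_Ioo x
    have hx' : x = Real.tan φ := (Real.tan_arctan x).symm
    rw [hx', re_eq n hφ] at hx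
    have hc : 0 < Real.cos φ := Real.cos_pos_of_mem_Ioo hφ
    have hcos : Real.cos ((n:ℝ) * (π/2 - φ)) = 0 := by
      rcases mul_eq_zero.1 hx with h | h
      · exact absurd h (by positivity)
      · exact h
    obtain ⟨k, hk⟩ := Real.cos_eq_zero_iff.1 hcos
    have h1 : 0 < (n:ℝ) * (π/2 - φ) := by
      have := hφ.2
      have : 0 < π/2 - φ := by linarith
      positivity
    have h2 : (n:ℝ) * (π/2 - φ) < n * π := by
      have := hφ.1
      have hn' : (0:ℝ) < n := by exact_mod_cast hn
      nlinarith
    rw [hk] at h1 h2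
    have hk0 : 0 ≤ k := by
      by_contra hneg
      push_neg at hneg
      have : (2*(k:ℝ)+1) ≤ -1 := by
        have : (k:ℝ) ≤ -1 := by exact_mod_cast (by omega : k ≤ -1)
        linarith
      nlinarith
    have hkn : k < (n:ℤ) := by
      by_contra hge
      push_neg at hge
      have : (n:ℝ) ≤ k := by exact_mod_cast hge
      nlinarith
    refine ⟨k.toNat, by omega, ?_⟩
    have hkt : ((k.toNat : ℕ) : ℝ) = (k:ℝ) := by
      exact_mod_cast congrArg (fun z : ℤ => (z : ℝ)) (Int.toNat_of_nonneg hk0)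
    have hφ' : φ = π/2 - (2*(k.toNat:ℝ)+1)*π/(2*n) := by
      rw [hkt]
      have hn' : (n:ℝ) ≠ 0 := by positivity
      field_simp at hk ⊢
      nlinarith [hk]
    rw [hx', f, hφ']
  · rintro ⟨k, hk, rfl⟩
    rw [f, re_eq n (phi_mem hn hk)]
    have : (n:ℝ) * (π/2 - (π/2 - (2*(k:ℝ)+1)*π/(2*n))) = (2*(k:ℤ)+1)*π/2 := by
      have hn' : (n:ℝ) ≠ 0 := by positivity
      push_cast
      field_simp
      ring
    rw [this, Real.cos_eq_zero_iff.2 ⟨k, rfl⟩, mul_zero]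

lemma inj_on (n : ℕ) (hn : 0 < n) : Set.InjOn (f n) ↑(Finset.range n) := by
  intro a ha b hb hab
  simp only [Finset.coe_range, Set.mem_Iio] at ha hb
  have h := Real.injOn_tan (phi_mem hn ha) (phi_mem hn hb) hab
  have hπ := Real.pi_pos
  have hn' : (0:ℝ) < n := by exact_mod_cast hn
  have h2 : (2*(a:ℝ)+1)*π/(2*n) = (2*(b:ℝ)+1)*π/(2*n) := by linarith
  field_simp [Real.pi_ne_zero] at h2
  have h3 : 2*a+1 = 2*b+1 := by exact_mod_cast h2
  omega

lemma key_ineq {n : ℕ} (hn : 0 < n) (k : ℕ) (c : ℝ) :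
    π/2 - (2*(k:ℝ)+1)*π/(2*n) < π*c ↔ (n:ℝ)*(1-2*c) < 2*k+1 := by
  have hπ := Real.pi_pos
  have hN : (0:ℝ) < 2*n := by positivity
  rw [sub_lt_comm, lt_div_iff₀ hN]
  constructor
  · intro h
    have h' : π * ((n:ℝ)*(1-2*c)) < π * (2*(k:ℝ)+1) := by nlinarith [h]
    exact lt_of_mul_lt_mul_left h' hπ.le
  · intro h
    nlinarith [mul_lt_mul_of_pos_left h hπ]

lemma key_ineq' {n : ℕ} (hn : 0 < n) (k : ℕ) (c : ℝ) :
    π*c < π/2 - (2*(k:ℝ)+1)*π/(2*n) ↔ (2*(k:ℝ)+1) < (n:ℝ)*(1-2*c) := by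
  have hπ := Real.pi_pos
  have hN : (0:ℝ) < 2*n := by positivity
  rw [lt_sub_comm, div_lt_iff₀ hN]
  constructor
  · intro h
    have h' : π * (2*(k:ℝ)+1) < π * ((n:ℝ)*(1-2*c)) := by nlinarith [h]
    exact lt_of_mul_lt_mul_left h' hπ.le
  · intro h
    nlinarith [mul_lt_mul_of_pos_left h hπ]

lemma mem_Ioo_iff {n : ℕ} (hn : 0 < n) {k : ℕ} (hk : k < n) :
    f n k ∈ Set.Ioo (-(Real.sqrt 3)⁻¹) (Real.sqrt 3)⁻¹ ↔ (2*n < 6*k+3 ∧ 6*k+3 < 4*n) := by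
  have hπ := Real.pi_pos
  have hmem := phi_mem hn hk
  have h6 : π/6 ∈ Set.Ioo (-(π/2)) (π/2) := by constructor <;> linarith
  have hm6 : -(π/6) ∈ Set.Ioo (-(π/2)) (π/2) := by constructor <;> linarith
  have ht6 : Real.tan (π/6) = (Real.sqrt 3)⁻¹ := by rw [Real.tan_pi_div_six]; ring
  have htm6 : Real.tan (-(π/6)) = -(Real.sqrt 3)⁻¹ := by rw [Real.tan_neg, ht6]
  rw [Set.mem_Ioo, f, ← ht6, ← Real.tan_neg,
    Real.strictMonoOn_tan.lt_iff_lt hm6 hmem, Real.strictMonoOn_tan.lt_iff_lt hmem h6]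
  have e1 : -(π/6) = π*(-(6⁻¹)) := by ring
  have e2 : (π/6) = π*(6⁻¹) := by ring
  rw [e1, e2, key_ineq hn k _, key_ineq' hn k _]
  have hA : ((n:ℝ)*(1-2*(6⁻¹)) < 2*(k:ℝ)+1) ↔ 2*n < 6*k+3 := by
    rw [← Nat.cast_lt (α := ℝ)]
    push_cast
    constructor <;> intro h <;> linarith
  have hB : ((2*(k:ℝ)+1) < (n:ℝ)*(1-2*(-(6⁻¹)))) ↔ 6*k+3 < 4*n := by
    rw [← Nat.cast_lt (α := ℝ)]
    push_cast
    constructor <;> intro h <;> linarith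
  rw [hB, hA]
  tauto

end Stmt2Aux

/-- For every positive integer `n`, the polynomial `R_n(x) = Re((x+i)^n)` has exactly `n`
distinct real roots, of which exactly `n − 2·⌊n/3 + 1/2⌋` lie in `(−1/√3, 1/√3)`. -/
theorem stmt_2 (n : ℕ) (hn : 0 < n) :
    {x : ℝ | (((x : ℂ) + Complex.I) ^ n).re = 0}.ncard = n ∧
    (({x : ℝ | (((x : ℂ) + Complex.I) ^ n).re = 0} ∩
        Set.Ioo (-(Real.sqrt 3)⁻¹) (Real.sqrt 3)⁻¹).ncard : ℤ) =
      (n : ℤ) - 2 * ⌊(n : ℝ) / 3 + 1 / 2⌋ := by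
  have hset : {x : ℝ | (((x : ℂ) + Complex.I) ^ n).re = 0}
      = ↑((Finset.range n).image (Stmt2Aux.f n)) := by
    ext x
    simp only [Set.mem_setOf_eq, Finset.coe_image, Set.mem_image, Finset.mem_coe,
      Finset.mem_range]
    rw [Stmt2Aux.mem_iff hn]
    constructor
    · rintro ⟨k, hk, rfl⟩; exact ⟨k, hk, rfl⟩
    · rintro ⟨k, hk, rfl⟩; exact ⟨k, hk, rfl⟩
  have hcard1 : {x : ℝ | (((x : ℂ) + Complex.I) ^ n).re = 0}.ncard = n := by
    rw [hset, Set.ncard_coe_finset,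
      Finset.card_image_of_injOn (Stmt2Aux.inj_on n hn), Finset.card_range]
  refine ⟨hcard1, ?_⟩
  have hset2 : {x : ℝ | (((x : ℂ) + Complex.I) ^ n).re = 0} ∩
        Set.Ioo (-(Real.sqrt 3)⁻¹) (Real.sqrt 3)⁻¹
      = ↑(((Finset.range n).filter
          (fun k => 2*n < 6*k+3 ∧ 6*k+3 < 4*n)).image (Stmt2Aux.f n)) := by
    rw [hset]
    ext x
    simp only [Finset.coe_image, Set.mem_inter_iff, Set.mem_image, Finset.mem_coe,
      Finset.mem_range, Finset.mem_filter]
    constructor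
    · rintro ⟨⟨k, hk, rfl⟩, hx⟩
      exact ⟨k, ⟨hk, (Stmt2Aux.mem_Ioo_iff hn hk).1 hx⟩, rfl⟩
    · rintro ⟨k, ⟨hk, hcond⟩, rfl⟩
      exact ⟨⟨k, hk, rfl⟩, (Stmt2Aux.mem_Ioo_iff hn hk).2 hcond⟩
  rw [hset2, Set.ncard_coe_finset,
    Finset.card_image_of_injOn ((Stmt2Aux.inj_on n hn).mono
      (by intro k hk; simp only [Finset.coe_filter, Set.mem_setOf_eq] at hk
          simp only [Finset.coe_range, Set.mem_Iio]
          exact Finset.mem_range.1 hk.1))]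
  have hfilter : (Finset.range n).filter (fun k => 2*n < 6*k+3 ∧ 6*k+3 < 4*n)
      = Finset.Icc ((2*n+3)/6) ((4*n-4)/6) := by
    ext k
    simp only [Finset.mem_filter, Finset.mem_range, Finset.mem_Icc]
    omega
  rw [hfilter, Nat.card_Icc]
  have hfloor : ⌊(n:ℝ)/3 + 1/2⌋ = (2*(n:ℤ)+3)/6 := by
    have h1 : ((n:ℝ)/3 + 1/2) = ((((2*(n:ℤ)+3 : ℤ) : ℚ)/((6:ℕ):ℚ) : ℚ) : ℝ) := by
      push_cast; ring
    rw [h1, Rat.floor_cast, Rat.floor_intCast_div_natCast]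
    norm_num
  rw [hfloor]
  have hd : (2*(n:ℤ)+3)/6 = (((2*n+3)/6 : ℕ) : ℤ) := by omega
  rw [hd]
  have key : (4*n-4)/6 + 1 - (2*n+3)/6 + 2*((2*n+3)/6) = n := by omega
  omega
end

section
/- For every positive integer n, the polynomial Q_n(x) = Im((x+i)^n) has all its roots real, and exactly n − 1 − 2·⌊n/3⌋ of them lie in the open interval (−1/√3, 1/√3). -/
open Real Set

/-- Key representation: `x + i = exp((π/2 - arctan x) i) / cos (arctan x)`. -/
lemma aux_repr (x : ℝ) :
    (x : ℂ) + Complex.I =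
      Complex.exp ((↑(π / 2 - Real.arctan x)) * Complex.I) / (Real.cos (Real.arctan x) : ℂ) := by
  have hc : Real.cos (Real.arctan x) ≠ 0 := (Real.cos_arctan_pos x).ne'
  have hc' : (Real.cos (Real.arctan x) : ℂ) ≠ 0 := by exact_mod_cast hc
  rw [Complex.exp_mul_I, ← Complex.ofReal_cos, ← Complex.ofReal_sin,
    Real.cos_pi_div_two_sub, Real.sin_pi_div_two_sub]
  rw [eq_div_iff hc']
  have hx : Real.sin (Real.arctan x) = x * Real.cos (Real.arctan x) := by
    have := Real.tan_arctan x
    rw [Real.tan_eq_sin_div_cos, div_eq_iff hc] at this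
    linarith
  push_cast [hx]
  ring

lemma aux_im (n : ℕ) (x : ℝ) :
    ((((x : ℂ)) + Complex.I) ^ n).im =
      Real.sin (n * (π / 2 - Real.arctan x)) / (Real.cos (Real.arctan x)) ^ n := by
  rw [aux_repr, div_pow, ← Complex.exp_nat_mul]
  have : (n : ℂ) * ((↑(π / 2 - Real.arctan x)) * Complex.I)
      = (↑((n : ℝ) * (π / 2 - Real.arctan x))) * Complex.I := by push_cast; ring
  rw [this]
  rw [show ((Real.cos (Real.arctan x) : ℂ)) ^ n = ((Real.cos (Real.arctan x) ^ n : ℝ) : ℂ) by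
    push_cast; ring]
  rw [Complex.div_ofReal_im, Complex.exp_ofReal_mul_I_im]

lemma tan_pi_div_six' : Real.tan (π / 6) = (Real.sqrt 3)⁻¹ := by
  have h3 : Real.sqrt 3 ≠ 0 := by positivity
  rw [Real.tan_eq_sin_div_cos, Real.sin_pi_div_six, Real.cos_pi_div_six]
  field_simp

/-- For every positive integer `n`, the polynomial `Q_n(x) = Im((x+i)^n)` (whose complex
zeros are exactly the `z` with `(z+i)^n = (z−i)^n`) has all its roots real, and exactly
`n − 1 − 2·⌊n/3⌋` of them lie in the open interval `(−1/√3, 1/√3)`. -/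
theorem stmt_3 (n : ℕ) (hn : 0 < n) :
    (∀ z : ℂ, (z + Complex.I) ^ n = (z - Complex.I) ^ n → z.im = 0) ∧
    (({x : ℝ | (((x : ℂ) + Complex.I) ^ n).im = 0} ∩
        Set.Ioo (-(Real.sqrt 3)⁻¹) (Real.sqrt 3)⁻¹).ncard : ℤ) =
      (n : ℤ) - 1 - 2 * ⌊(n : ℝ) / 3⌋ := by
  have hπ := Real.pi_pos
  have hn' : (0 : ℝ) < n := by exact_mod_cast hn
  constructor
  · intro z hz
    have habs : ‖z + Complex.I‖ = ‖z - Complex.I‖ := by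
      have := congrArg (‖·‖) hz
      rw [← pow_left_inj₀ (by positivity) (by positivity) hn.ne']
      simpa [norm_pow] using this
    have h2 : ‖z + Complex.I‖ ^ 2 = ‖z - Complex.I‖ ^ 2 := by
      rw [habs]
    rw [Complex.sq_norm, Complex.sq_norm] at h2
    simp [Complex.normSq_apply, Complex.add_im, Complex.sub_im] at h2
    nlinarith
  · set g : ℤ → ℝ := fun k => Real.tan (π / 2 - k * π / n) with hg
    set K : Set ℤ := {k | (n : ℤ) < 3 * k ∧ 3 * k < 2 * n} with hK
    -- membership bounds: for k in K, π/2 - kπ/n ∈ (-π/6, π/6)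
    have hbound : ∀ k : ℤ, k ∈ K → -(π/6) < π / 2 - k * π / n ∧ π / 2 - k * π / n < π/6 := by
      intro k hk
      obtain ⟨h1, h2⟩ := hk
      have h1' : (n : ℝ) < 3 * k := by exact_mod_cast h1
      have h2' : (3 : ℝ) * k < 2 * n := by exact_mod_cast h2
      have e1 : π / 3 < k * π / n := by
        rw [div_lt_div_iff₀ (by norm_num) hn']
        nlinarith
      have e2 : k * π / n < 2 * π / 3 := by
        rw [div_lt_div_iff₀ hn' (by norm_num)]
        nlinarith
      constructor <;> linarith
    have hπ6 : π / 6 < π / 2 := by linarith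
    have ha6 : Real.arctan ((Real.sqrt 3)⁻¹) = π / 6 := by
      rw [← tan_pi_div_six', Real.arctan_tan (by linarith) hπ6]
    have himage : {x : ℝ | (((x : ℂ) + Complex.I) ^ n).im = 0} ∩
        Set.Ioo (-(Real.sqrt 3)⁻¹) (Real.sqrt 3)⁻¹ = g '' K := by
      ext x
      simp only [Set.mem_inter_iff, Set.mem_setOf_eq, Set.mem_Ioo, Set.mem_image]
      constructor
      · rintro ⟨hx, hlo, hhi⟩
        rw [aux_im, div_eq_zero_iff] at hx
        have hcpos := Real.cos_arctan_pos x
        have hsin : Real.sin (n * (π / 2 - Real.arctan x)) = 0 := by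
          rcases hx with h | h
          · exact h
          · exact absurd h (by positivity)
        obtain ⟨k, hk⟩ := Real.sin_eq_zero_iff.mp hsin
        have hxlt : Real.arctan x < π / 6 := ha6 ▸ Real.arctan_strictMono hhi
        have hxgt : -(π / 6) < Real.arctan x := by
          have := Real.arctan_strictMono hlo
          rwa [Real.arctan_neg, ha6] at this
        refine ⟨k, ⟨?_, ?_⟩, ?_⟩
        · have h1 : (n : ℝ) * π < 3 * k * π := by nlinarith
          have h2 : (n : ℝ) < 3 * k := lt_of_mul_lt_mul_right h1 hπ.le
          exact_mod_cast h2
        · have h1 : (3 : ℝ) * k * π < 2 * n * π := by nlinarith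
          have h2 : (3 : ℝ) * k < 2 * n := lt_of_mul_lt_mul_right h1 hπ.le
          exact_mod_cast h2
        · have hθ : (k : ℝ) * π / n = π / 2 - Real.arctan x := by
            field_simp
            linarith
          rw [hg]
          simp only []
          rw [hθ]
          rw [show π / 2 - (π / 2 - Real.arctan x) = Real.arctan x by ring,
            Real.tan_arctan]
      · rintro ⟨k, hk, rfl⟩
        obtain ⟨hb1, hb2⟩ := hbound k hk
        have hmem1 : -(π / 2) < π / 2 - k * π / n := by linarith
        have hmem2 : π / 2 - k * π / n < π / 2 := by linarith
        have harc : Real.arctan (g k) = π / 2 - k * π / n := by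
          rw [hg]; exact Real.arctan_tan hmem1 hmem2
        refine ⟨?_, ?_, ?_⟩
        · rw [aux_im, harc, div_eq_zero_iff]
          left
          have : (n : ℝ) * (π / 2 - (π / 2 - k * π / n)) = k * π := by
            field_simp
            ring
          rw [this]
          exact Real.sin_int_mul_pi k
        · have := Real.strictMonoOn_tan (a := -(π / 6)) (b := π / 2 - k * π / n)
            ⟨by linarith, by linarith⟩ ⟨hmem1, hmem2⟩ hb1
          rwa [Real.tan_neg, tan_pi_div_six'] at this
        · have := Real.strictMonoOn_tan (a := π / 2 - k * π / n) (b := π / 6)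
            ⟨hmem1, hmem2⟩ ⟨by linarith, hπ6⟩ hb2
          rwa [tan_pi_div_six'] at this
    have hinj : Set.InjOn g K := by
      intro k1 hk1 k2 hk2 h
      obtain ⟨h11, h12⟩ := hbound k1 hk1
      obtain ⟨h21, h22⟩ := hbound k2 hk2
      have := Real.injOn_tan ⟨by linarith, by linarith⟩ ⟨by linarith, by linarith⟩ h
      have hkk : (k1 : ℝ) * π / n = k2 * π / n := by linarith
      field_simp at hkk
      exact_mod_cast (by linarith : (k1 : ℝ) = k2)
    rw [himage, Set.ncard_image_of_injOn hinj]
    have hKF : K = ↑(Finset.Ioo ((n : ℤ) / 3) ((n : ℤ) - (n : ℤ) / 3)) := by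
      ext k
      simp only [hK, Set.mem_setOf_eq, Finset.coe_Ioo, Set.mem_Ioo]
      omega
    rw [hKF, Set.ncard_coe_finset, Int.card_Ioo]
    have hfl : ⌊(n : ℝ) / 3⌋ = (n : ℤ) / 3 := by
      rw [Int.floor_eq_iff]
      have hq1 : 3 * ((n : ℤ) / 3) ≤ (n : ℤ) := by omega
      have hq2 : (n : ℤ) < 3 * ((n : ℤ) / 3) + 3 := by omega
      have hq1' : 3 * (((n : ℤ) / 3 : ℤ) : ℝ) ≤ (n : ℝ) := by exact_mod_cast hq1
      have hq2' : (n : ℝ) < 3 * (((n : ℤ) / 3 : ℤ) : ℝ) + 3 := by exact_mod_cast hq2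
      constructor <;> [linarith; linarith]
    rw [hfl]
    omega
end

section
/- Let f = Σ_{j=0}^p f_j E₂^j be a quasimodular form of weight k and depth p for SL₂(ℤ), where each f_j is a modular form of weight k−2j. Then for every γ = (a b; c d) ∈ SL₂(ℤ), (cτ+d)^{-k} f((aτ+b)/(cτ+d)) = Σ_{j=0}^p (𝔡^j f)(τ)/j! · ((1/(2πi)) · c/(cτ+d))^j, where 𝔡 is the derivation on quasimodular forms determined by 𝔡(E₂) = 12 and 𝔡(g) = 0 for modular forms g. -/
open Complex Finset

/-- Let `f = Σ_{j=0}^p f_j E₂^j` be a quasimodular form of weight `k` and depth `p` for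
`SL₂(ℤ)`, where each `f_j` is a modular form of weight `k−2j` and `E₂` satisfies its
quasimodular transformation law. Then for every `γ = (a b; c d) ∈ SL₂(ℤ)`,
`(cτ+d)^{-k} f((aτ+b)/(cτ+d)) = Σ_{j=0}^p (𝔡^j f)(τ)/j! · ((1/(2πi))·c/(cτ+d))^j`,
where `(𝔡^j f)/j! = 12^j Σ_l binom(l,j) f_l E₂^{l−j}` (so `𝔡E₂ = 12` and `𝔡` kills
modular forms). -/
theorem stmt_9 (k : ℤ) (p : ℕ) (f : ℕ → ℂ → ℂ) (E₂ : ℂ → ℂ)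
    (hf : ∀ j ≤ p, ∀ a b c d : ℤ, a * d - b * c = 1 → ∀ τ : ℂ, 0 < τ.im →
      f j (((a : ℂ) * τ + b) / ((c : ℂ) * τ + d)) =
        ((c : ℂ) * τ + d) ^ (k - 2 * (j : ℤ)) * f j τ)
    (hE2 : ∀ a b c d : ℤ, a * d - b * c = 1 → ∀ τ : ℂ, 0 < τ.im →
      E₂ (((a : ℂ) * τ + b) / ((c : ℂ) * τ + d)) =
        ((c : ℂ) * τ + d) ^ 2 * E₂ τ +
          (12 / (2 * Real.pi * Complex.I)) * c * ((c : ℂ) * τ + d)) :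
    ∀ a b c d : ℤ, a * d - b * c = 1 → ∀ τ : ℂ, 0 < τ.im →
      ((c : ℂ) * τ + d) ^ (-k) *
          ∑ j ∈ Finset.range (p + 1),
            f j (((a : ℂ) * τ + b) / ((c : ℂ) * τ + d)) *
              E₂ (((a : ℂ) * τ + b) / ((c : ℂ) * τ + d)) ^ j =
        ∑ j ∈ Finset.range (p + 1),
          (12 ^ j * ∑ l ∈ Finset.range (p + 1),
              (l.choose j : ℂ) * f l τ * E₂ τ ^ (l - j)) *
            ((1 / (2 * Real.pi * Complex.I)) * c / ((c : ℂ) * τ + d)) ^ j := by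
  intro a b c d hdet τ hτ
  have hJ : ((c : ℂ) * τ + d) ≠ 0 := by
    rcases eq_or_ne c 0 with hc | hc
    · subst hc
      have hd : d ≠ 0 := by rintro rfl; simp at hdet
      simpa using (Int.cast_ne_zero (α := ℂ)).2 hd
    · intro h0
      have him := congrArg Complex.im h0
      simp [Complex.add_im, Complex.mul_im] at him
      rcases him with h | h
      · exact hc (by exact_mod_cast h)
      · exact absurd h (ne_of_gt hτ)
  set J : ℂ := (c : ℂ) * τ + d with hJdef
  set w : ℂ := (1 / (2 * Real.pi * Complex.I)) * c / J with hwdef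
  have hE : E₂ (((a : ℂ) * τ + b) / ((c : ℂ) * τ + d)) = J ^ 2 * (E₂ τ + 12 * w) := by
    have h2pi : (2 * (Real.pi : ℂ) * Complex.I) ≠ 0 := by
      simp [Real.pi_ne_zero, Complex.I_ne_zero]
    rw [hE2 a b c d hdet τ hτ, hwdef]
    field_simp [hJ, h2pi]
    ring
  have hLHS : ((c : ℂ) * τ + d) ^ (-k) *
      ∑ j ∈ Finset.range (p + 1),
        f j (((a : ℂ) * τ + b) / ((c : ℂ) * τ + d)) *
          E₂ (((a : ℂ) * τ + b) / ((c : ℂ) * τ + d)) ^ j =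
      ∑ j ∈ Finset.range (p + 1), f j τ * (E₂ τ + 12 * w) ^ j := by
    rw [Finset.mul_sum]
    refine Finset.sum_congr rfl fun j hj => ?_
    have hjp : j ≤ p := Nat.lt_succ_iff.mp (Finset.mem_range.mp hj)
    rw [hf j hjp a b c d hdet τ hτ, hE, mul_pow]
    have hpow : J ^ (-k) * (J ^ (k - 2 * (j : ℤ)) * ((J ^ 2) ^ j)) = 1 := by
      have : (J ^ 2) ^ j = J ^ ((2 * j : ℕ) : ℤ) := by
        rw [← pow_mul, zpow_natCast]
      rw [this, ← zpow_add₀ hJ, ← zpow_add₀ hJ]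
      have : -k + (k - 2 * (j : ℤ) + ((2 * j : ℕ) : ℤ)) = 0 := by push_cast; ring
      rw [this, zpow_zero]
    calc J ^ (-k) * (J ^ (k - 2 * (j : ℤ)) * f j τ * ((J ^ 2) ^ j * (E₂ τ + 12 * w) ^ j))
        = (J ^ (-k) * (J ^ (k - 2 * (j : ℤ)) * ((J ^ 2) ^ j))) * (f j τ * (E₂ τ + 12 * w) ^ j) := by
          ring
      _ = f j τ * (E₂ τ + 12 * w) ^ j := by rw [hpow, one_mul]
  rw [hLHS]
  have hRHS : ∑ j ∈ Finset.range (p + 1),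
      (12 ^ j * ∑ l ∈ Finset.range (p + 1),
          (l.choose j : ℂ) * f l τ * E₂ τ ^ (l - j)) * w ^ j =
      ∑ l ∈ Finset.range (p + 1), f l τ * (E₂ τ + 12 * w) ^ l := by
    have hswap : ∑ j ∈ Finset.range (p + 1),
        (12 ^ j * ∑ l ∈ Finset.range (p + 1),
            (l.choose j : ℂ) * f l τ * E₂ τ ^ (l - j)) * w ^ j =
        ∑ l ∈ Finset.range (p + 1), ∑ j ∈ Finset.range (p + 1),
          f l τ * ((12 * w) ^ j * E₂ τ ^ (l - j) * (l.choose j : ℂ)) := by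
      rw [Finset.sum_comm]
      refine Finset.sum_congr rfl fun j _ => ?_
      rw [Finset.mul_sum, Finset.sum_mul]
      refine Finset.sum_congr rfl fun l _ => ?_
      rw [mul_pow]
      ring
    rw [hswap]
    refine Finset.sum_congr rfl fun l hl => ?_
    have hlp : l ≤ p := Nat.lt_succ_iff.mp (Finset.mem_range.mp hl)
    rw [← Finset.mul_sum]
    congr 1
    rw [add_comm (E₂ τ) (12 * w), add_pow]
    symm
    apply Finset.sum_subset
    · exact Finset.range_subset_range.mpr (by omega)
    · intro j _ hj
      have : l < j := by
        simp only [Finset.mem_range, not_lt] at hj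
        omega
      rw [Nat.choose_eq_zero_of_lt this]
      simp
  rw [← hRHS]
end

section
/- Let f = Σ_{j=0}^p f_j E₂^j be a quasimodular form of weight k with real Fourier coefficients, and set f̂(θ) = e^{ikθ/2} f(e^{iθ}) and likewise ĝ(θ) = e^{i(wt g)θ/2} g(e^{iθ}) for quasimodular g. Then Im(f̂(θ)) = (i/2) Σ_{m≥1} (2πi)^{-m} (m!)^{-1} · (𝔡^m f)^(θ) for all θ ∈ (0,π), where 𝔡 is the derivation with 𝔡(E₂)=12 and 𝔡 annihilating modular forms. -/
open Complex Finset

private lemma aux_pow (w c : ℂ) (j : ℕ) :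
    w ^ j - (w + c) ^ j = -∑ m ∈ Finset.Icc 1 j, (j.choose m : ℂ) * c ^ m * w ^ (j - m) := by
  rw [add_comm w c, add_pow, Finset.range_eq_Ico,
    Finset.sum_eq_sum_Ico_succ_bot (by omega : 0 < j + 1), Finset.Ico_add_one_right_eq_Icc]
  simp only [pow_zero, Nat.sub_zero, Nat.choose_zero_right, Nat.cast_one, one_mul, mul_one]
  have h : ∑ m ∈ Finset.Icc 1 j, c ^ m * w ^ (j - m) * (j.choose m : ℂ)
      = ∑ m ∈ Finset.Icc 1 j, (j.choose m : ℂ) * c ^ m * w ^ (j - m) :=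
    Finset.sum_congr rfl fun m _ => by ring
  rw [h, ← Finset.sum_neg_distrib, Finset.sum_neg_distrib]
  ring

private lemma aux_sum (p : ℕ) (A : ℕ → ℂ) (w c : ℂ) :
    ∑ j ∈ Finset.range (p + 1), A j * (w ^ j - (w + c) ^ j)
      = -∑ m ∈ Finset.Icc 1 p, c ^ m *
          ∑ j ∈ Finset.range (p + 1), (j.choose m : ℂ) * A j * w ^ (j - m) := by
  have h1 : ∀ j ∈ Finset.range (p + 1),
      A j * (w ^ j - (w + c) ^ j)
        = -∑ m ∈ Finset.Icc 1 p, (j.choose m : ℂ) * A j * c ^ m * w ^ (j - m) := by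
    intro j hj
    rw [aux_pow, mul_neg, Finset.mul_sum]
    congr 1
    rw [Finset.sum_subset (Finset.Icc_subset_Icc_right (by
      simpa using Nat.lt_succ_iff.1 (Finset.mem_range.1 hj)))]
    · exact Finset.sum_congr rfl fun m _ => by ring
    · intro m hm hm'
      have : j < m := by
        simp only [Finset.mem_Icc] at hm hm'; omega
      simp [Nat.choose_eq_zero_of_lt this]
  calc ∑ j ∈ Finset.range (p + 1), A j * (w ^ j - (w + c) ^ j)
      = ∑ j ∈ Finset.range (p + 1),
          -∑ m ∈ Finset.Icc 1 p, (j.choose m : ℂ) * A j * c ^ m * w ^ (j - m) :=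
        Finset.sum_congr rfl h1
    _ = -∑ j ∈ Finset.range (p + 1),
          ∑ m ∈ Finset.Icc 1 p, (j.choose m : ℂ) * A j * c ^ m * w ^ (j - m) := by
        rw [Finset.sum_neg_distrib]
    _ = -∑ m ∈ Finset.Icc 1 p,
          ∑ j ∈ Finset.range (p + 1), (j.choose m : ℂ) * A j * c ^ m * w ^ (j - m) := by
        rw [Finset.sum_comm]
    _ = -∑ m ∈ Finset.Icc 1 p, c ^ m *
          ∑ j ∈ Finset.range (p + 1), (j.choose m : ℂ) * A j * w ^ (j - m) := by
        congr 1
        refine Finset.sum_congr rfl fun m _ => ?_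
        rw [Finset.mul_sum]
        exact Finset.sum_congr rfl fun j _ => by ring

/-- Let `f = Σ_{j=0}^p f_j E₂^j` be a quasimodular form of weight `k` with real Fourier
coefficients (so each `f̂_j(θ) = e^{i(k−2j)θ/2} f_j(e^{iθ})` is real on `(0,π)` and
`conj(Ê₂(θ)) = Ê₂(θ) + 12/(2πi)`). Then
`Im(f̂(θ)) = (i/2) Σ_{m=1}^p (2πi)^{-m} (m!)^{-1} (𝔡^m f)^(θ)` for all `θ ∈ (0,π)`,
where `𝔡^m f = m!·12^m Σ_j binom(j,m) f_j E₂^{j−m}`. -/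
theorem stmt_10 (k : ℤ) (p : ℕ) (f : ℕ → ℂ → ℂ) (E₂ : ℂ → ℂ)
    (hfreal : ∀ j ≤ p, ∀ θ ∈ Set.Ioo (0 : ℝ) Real.pi,
      (Complex.exp (Complex.I * ((k : ℂ) - 2 * j) * θ / 2) *
          f j (Complex.exp (Complex.I * θ))).im = 0)
    (hE2 : ∀ θ ∈ Set.Ioo (0 : ℝ) Real.pi,
      (starRingEnd ℂ)
          (Complex.exp (Complex.I * θ) * E₂ (Complex.exp (Complex.I * θ))) =
        Complex.exp (Complex.I * θ) * E₂ (Complex.exp (Complex.I * θ)) +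
          12 / (2 * Real.pi * Complex.I)) :
    ∀ θ ∈ Set.Ioo (0 : ℝ) Real.pi,
      (((Complex.exp (Complex.I * k * θ / 2) *
            ∑ j ∈ Finset.range (p + 1),
              f j (Complex.exp (Complex.I * θ)) *
                E₂ (Complex.exp (Complex.I * θ)) ^ j).im : ℝ) : ℂ) =
        (Complex.I / 2) *
          ∑ m ∈ Finset.Icc 1 p,
            (2 * Real.pi * Complex.I) ^ (-(m : ℤ)) * (1 / (m.factorial : ℂ)) *
              (Complex.exp (Complex.I * ((k : ℂ) - 2 * m) * θ / 2) *
                ((m.factorial : ℂ) * 12 ^ m *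
                  ∑ j ∈ Finset.range (p + 1),
                    (j.choose m : ℂ) * f j (Complex.exp (Complex.I * θ)) *
                      E₂ (Complex.exp (Complex.I * θ)) ^ (j - m))) := by
  intro θ hθ
  set q : ℂ := Complex.exp (Complex.I * θ) with hq
  set w : ℂ := q * E₂ q with hw
  set c : ℂ := 12 / (2 * Real.pi * Complex.I) with hc
  set A : ℕ → ℂ := fun j => Complex.exp (Complex.I * ((k : ℂ) - 2 * j) * θ / 2) * f j q with hA
  have hπI : (2 : ℂ) * Real.pi * Complex.I ≠ 0 := by
    simp [Real.pi_ne_zero, Complex.I_ne_zero, Complex.ofReal_ne_zero]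
  have hAre : ∀ j, j ∈ Finset.range (p + 1) → (starRingEnd ℂ) (A j) = A j := fun j hj =>
    Complex.conj_eq_iff_im.2
      (hfreal j (Nat.lt_succ_iff.1 (Finset.mem_range.1 hj)) θ hθ)
  have hwc : (starRingEnd ℂ) w = w + c := hE2 θ hθ
  have hqpow : ∀ j : ℕ, q ^ j = Complex.exp (Complex.I * j * θ) := by
    intro j
    rw [hq, ← Complex.exp_nat_mul]
    congr 1; ring
  -- rewrite the LHS inner product
  have hS : Complex.exp (Complex.I * k * θ / 2) * ∑ j ∈ Finset.range (p + 1), f j q * E₂ q ^ j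
      = ∑ j ∈ Finset.range (p + 1), A j * w ^ j := by
    rw [Finset.mul_sum]
    refine Finset.sum_congr rfl fun j hj => ?_
    rw [hA, hw, mul_pow, hqpow]
    have : Complex.exp (Complex.I * ((k : ℂ) - 2 * j) * θ / 2) *
        Complex.exp (Complex.I * j * θ) = Complex.exp (Complex.I * k * θ / 2) := by
      rw [← Complex.exp_add]; congr 1; ring
    calc Complex.exp (Complex.I * k * θ / 2) * (f j q * E₂ q ^ j)
        = (Complex.exp (Complex.I * ((k : ℂ) - 2 * j) * θ / 2) *
            Complex.exp (Complex.I * j * θ)) * (f j q * E₂ q ^ j) := by rw [this]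
      _ = _ := by ring
  set S : ℂ := ∑ j ∈ Finset.range (p + 1), A j * w ^ j with hSdef
  rw [hS]
  have hconjS : (starRingEnd ℂ) S = ∑ j ∈ Finset.range (p + 1), A j * (w + c) ^ j := by
    rw [hSdef, map_sum]
    exact Finset.sum_congr rfl fun j hj => by rw [map_mul, map_pow, hAre j hj, hwc]
  have hImS : ((S.im : ℝ) : ℂ) = (S - (starRingEnd ℂ) S) / (2 * Complex.I) := by
    rw [Complex.sub_conj]
    push_cast
    field_simp
  have hdiff : S - (starRingEnd ℂ) S
      = -∑ m ∈ Finset.Icc 1 p, c ^ m *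
          ∑ j ∈ Finset.range (p + 1), (j.choose m : ℂ) * A j * w ^ (j - m) := by
    rw [hconjS, hSdef, ← Finset.sum_sub_distrib]
    rw [Finset.sum_congr rfl fun j _ => (mul_sub (A j) (w ^ j) ((w + c) ^ j)).symm]
    exact aux_sum p A w c
  rw [hImS, hdiff]
  -- now handle the RHS
  have hRHS : ∀ m ∈ Finset.Icc 1 p,
      (2 * (Real.pi : ℂ) * Complex.I) ^ (-(m : ℤ)) * (1 / (m.factorial : ℂ)) *
        (Complex.exp (Complex.I * ((k : ℂ) - 2 * m) * θ / 2) *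
          ((m.factorial : ℂ) * 12 ^ m *
            ∑ j ∈ Finset.range (p + 1), (j.choose m : ℂ) * f j q * E₂ q ^ (j - m)))
      = c ^ m * ∑ j ∈ Finset.range (p + 1), (j.choose m : ℂ) * A j * w ^ (j - m) := by
    intro m hm
    have hfac : (m.factorial : ℂ) ≠ 0 := Nat.cast_ne_zero.2 m.factorial_ne_zero
    have hcm : c ^ m = 12 ^ m * (2 * (Real.pi : ℂ) * Complex.I) ^ (-(m : ℤ)) := by
      rw [hc, div_pow, zpow_neg, zpow_natCast, div_eq_mul_inv]
    have hsum : Complex.exp (Complex.I * ((k : ℂ) - 2 * m) * θ / 2) *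
        ∑ j ∈ Finset.range (p + 1), (j.choose m : ℂ) * f j q * E₂ q ^ (j - m)
        = ∑ j ∈ Finset.range (p + 1), (j.choose m : ℂ) * A j * w ^ (j - m) := by
      rw [Finset.mul_sum]
      refine Finset.sum_congr rfl fun j hj => ?_
      rcases lt_or_ge j m with hjm | hjm
      · simp [Nat.choose_eq_zero_of_lt hjm]
      · rw [hA, hw, mul_pow, hqpow]
        have hcast : ((j - m : ℕ) : ℂ) = (j : ℂ) - m := by
          push_cast [Nat.cast_sub hjm]; ring
        have hexp : Complex.exp (Complex.I * ((k : ℂ) - 2 * j) * θ / 2) *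
            Complex.exp (Complex.I * ((j - m : ℕ) : ℂ) * θ)
            = Complex.exp (Complex.I * ((k : ℂ) - 2 * m) * θ / 2) := by
          rw [← Complex.exp_add]; congr 1; rw [hcast]; ring
        calc Complex.exp (Complex.I * ((k : ℂ) - 2 * m) * θ / 2) *
              ((j.choose m : ℂ) * f j q * E₂ q ^ (j - m))
            = (Complex.exp (Complex.I * ((k : ℂ) - 2 * j) * θ / 2) *
                Complex.exp (Complex.I * ((j - m : ℕ) : ℂ) * θ)) *
              ((j.choose m : ℂ) * f j q * E₂ q ^ (j - m)) := by rw [hexp]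
          _ = _ := by ring
    rw [← hsum, hcm]
    field_simp
  rw [Finset.sum_congr rfl hRHS]
  rw [neg_div, div_eq_mul_inv]
  have : ((2 : ℂ) * Complex.I)⁻¹ = -(Complex.I / 2) := by
    rw [mul_inv, Complex.inv_I]; ring
  rw [this]
  ring
end

section
/- Let g be a modular form of weight k for SL₂(ℤ) with real Fourier coefficients, with natural Taylor expansion (1−w)^{−k} g((ρ − ρ̄w)/(1−w)) = Σ_{n≥v} b_n w^n (b_v ≠ 0) around ρ = −1/2 + (√3/2)i, and ordinary Taylor expansion g(z) = Σ_{n≥v} c_n (2πi)^n (z−ρ)^n. Then sgn(b_v) = (−1)^v sgn(c_v), and lim_{t↓0} sgn(g(ρ + it)) = sgn(b_v). -/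
open Complex

open Filter Topology

lemma sign_pos_mul' {p : ℝ} (hp : 0 < p) (x : ℝ) : Real.sign (p * x) = Real.sign x := by
  rcases lt_trichotomy x 0 with h | h | h
  · rw [Real.sign_of_neg h, Real.sign_of_neg (mul_neg_of_pos_of_neg hp h)]
  · simp [h]
  · rw [Real.sign_of_pos h, Real.sign_of_pos (mul_pos hp h)]

set_option maxHeartbeats 1000000 in
lemma key_tendsto' (a : ℕ → ℝ) (v : ℕ) (δ : ℝ) (hδ : 0 < δ) (f : ℝ → ℝ)
    (hf : ∀ x : ℝ, 0 < x → x < δ → HasSum (fun n => a n * x ^ n) (f x))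
    (h0 : ∀ n < v, a n = 0) :
    Tendsto (fun x => f x / x ^ v) (𝓝[>] (0:ℝ)) (𝓝 (a v)) := by
  set r : ℝ := min δ 1 / 2 with hrdef
  have hr0 : 0 < r := by positivity
  have hrδ : r < δ := by
    have := min_le_left δ 1; simp only [hrdef]; linarith
  have hr1 : r < 1 := by
    have := min_le_right δ 1; simp only [hrdef]; linarith
  have hsum_r : Summable (fun n => a n * r ^ n) := (hf r hr0 hrδ).summable
  have hsum_sh : Summable (fun n => |a (n + (v + 1))| * r ^ n) := by
    have h1 : Summable (fun n => a (n + (v + 1)) * r ^ (n + (v + 1))) :=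
      (summable_nat_add_iff (v + 1)).2 hsum_r
    have h2 : Summable (fun n => |a (n + (v + 1)) * r ^ (n + (v + 1))|) := h1.abs
    have h3 : Summable (fun n => |a (n + (v + 1)) * r ^ (n + (v + 1))| / r ^ (v + 1)) :=
      h2.div_const _
    refine h3.congr fun n => ?_
    rw [abs_mul, abs_of_pos (by positivity : (0:ℝ) < r ^ (n + (v+1))), pow_add,
      mul_div_assoc, mul_div_cancel_right₀ _ (by positivity : (r:ℝ) ^ (v+1) ≠ 0)]
  set C : ℝ := ∑' n, |a (n + (v + 1))| * r ^ n with hC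
  have hest : ∀ x : ℝ, 0 < x → x < r → |f x / x ^ v - a v| ≤ C * x := by
    intro x hx hxr
    have hxv : (x : ℝ) ^ v ≠ 0 := by positivity
    have hz : ∑ i ∈ Finset.range v, a i * x ^ i = 0 :=
      Finset.sum_eq_zero fun i hi => by rw [h0 i (Finset.mem_range.1 hi), zero_mul]
    have h1 : HasSum (fun n => a (n + v) * x ^ (n + v)) (f x) := by
      have := (hasSum_nat_add_iff' (f := fun n => a n * x ^ n) v
        (g := f x)).2 (hf x hx (hxr.trans hrδ))
      rw [hz, sub_zero] at this
      exact this
    have h2 : HasSum (fun n => a (n + v) * x ^ n) (f x / x ^ v) := by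
      have := h1.div_const (x ^ v)
      refine this.congr_fun fun n => ?_
      rw [pow_add, ← mul_assoc, mul_div_cancel_right₀ _ hxv]
    have h3 : HasSum (fun n => a (n + 1 + v) * x ^ (n + 1)) (f x / x ^ v - a v) := by
      have := (hasSum_nat_add_iff' (f := fun n => a (n + v) * x ^ n) 1
        (g := f x / x ^ v)).2 h2
      simpa [add_comm, add_assoc, add_left_comm] using this
    have hxle : x ≤ r := le_of_lt hxr
    have hterm : ∀ n : ℕ, |a (n + 1 + v) * x ^ (n + 1)| ≤ x * (|a (n + (v + 1))| * r ^ n) := by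
      intro n
      have e : a (n + 1 + v) = a (n + (v + 1)) := by ring_nf
      have hxn : x ^ n ≤ r ^ n := pow_le_pow_left₀ (le_of_lt hx) hxle n
      rw [abs_mul, e, abs_of_pos (pow_pos hx (n+1))]
      calc |a (n + (v + 1))| * x ^ (n + 1) = x * (|a (n + (v + 1))| * x ^ n) := by ring
        _ ≤ x * (|a (n + (v + 1))| * r ^ n) :=
          mul_le_mul_of_nonneg_left (mul_le_mul_of_nonneg_left hxn (abs_nonneg _)) hx.le
    have hsum2 : Summable (fun n => |a (n + 1 + v) * x ^ (n + 1)|) := by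
      refine Summable.of_nonneg_of_le (fun n => abs_nonneg _) hterm ?_
      exact hsum_sh.mul_left x
    have habs : |f x / x ^ v - a v| ≤ ∑' n, |a (n + 1 + v) * x ^ (n + 1)| := by
      rw [← h3.tsum_eq]
      have := norm_tsum_le_tsum_norm (f := fun n => a (n + 1 + v) * x ^ (n + 1))
        (by simpa only [Real.norm_eq_abs] using hsum2)
      simpa only [Real.norm_eq_abs] using this
    refine habs.trans ?_
    calc ∑' n, |a (n + 1 + v) * x ^ (n + 1)| ≤ ∑' n, x * (|a (n + (v + 1))| * r ^ n) :=
          Summable.tsum_le_tsum hterm hsum2 (hsum_sh.mul_left x)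
      _ = x * C := by rw [tsum_mul_left]
      _ = C * x := mul_comm _ _
  rw [← tendsto_sub_nhds_zero_iff]
  have habs0 : Tendsto (fun x => |f x / x ^ v - a v|) (𝓝[>] (0:ℝ)) (𝓝 0) := by
    apply squeeze_zero' (Filter.Eventually.of_forall fun x => abs_nonneg _)
    · filter_upwards [Ioo_mem_nhdsGT_of_mem (Set.mem_Ico.2 ⟨le_refl (0:ℝ), hr0⟩)] with x hx
      exact hest x hx.1 hx.2
    · have : Tendsto (fun x : ℝ => C * x) (𝓝 (0:ℝ)) (𝓝 (C * 0)) :=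
        (continuous_const.mul continuous_id).tendsto 0
      simpa using this.mono_left nhdsWithin_le_nhds
  exact (tendsto_zero_iff_abs_tendsto_zero _).2 habs0

/-- Let `g` be a modular form of weight `k` with real Fourier coefficients (so `g(ρ+it)`
is real for `t > 0`), with natural Taylor expansion
`(1−w)^{−k} g((ρ − ρ̄w)/(1−w)) = Σ_{n≥v} b_n w^n` (`b_v ≠ 0`) around
`ρ = −1/2 + (√3/2)i`, and ordinary Taylor expansion
`g(z) = Σ_{n≥v} c_n (2πi)^n (z−ρ)^n` (`c_v ≠ 0`). Then `sgn(b_v) = (−1)^v sgn(c_v)` and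
`lim_{t↓0} sgn(g(ρ + it)) = sgn(b_v)`. -/
theorem stmt_19 (k : ℤ) (g : ℂ → ℂ) (v : ℕ) (b c : ℕ → ℝ) (ρ : ℂ)
    (hρ : ρ = -1 / 2 + (Real.sqrt 3 / 2 : ℝ) * Complex.I)
    (hreal : ∀ t : ℝ, 0 < t → (g (ρ + t * Complex.I)).im = 0)
    (hb : ∀ w : ℂ, ‖w‖ < 1 →
      HasSum (fun n : ℕ => (b n : ℂ) * w ^ n)
        ((1 - w) ^ (-k) * g ((ρ - (starRingEnd ℂ) ρ * w) / (1 - w))))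
    (hb0 : ∀ n < v, b n = 0) (hbv : b v ≠ 0)
    (hc : ∃ r > (0 : ℝ), ∀ z : ℂ, ‖z - ρ‖ < r →
      HasSum (fun n : ℕ => (c n : ℂ) * (2 * Real.pi * Complex.I) ^ n * (z - ρ) ^ n)
        (g z))
    (hc0 : ∀ n < v, c n = 0) (hcv : c v ≠ 0) :
    Real.sign (b v) = (-1 : ℝ) ^ v * Real.sign (c v) ∧
    Filter.Tendsto (fun t : ℝ => Real.sign ((g (ρ + t * Complex.I)).re))
      (nhdsWithin 0 (Set.Ioi 0)) (nhds (Real.sign (b v))) := by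
  obtain ⟨r, hrpos, hcs⟩ := hc
  have hs0 : (0:ℝ) < Real.sqrt 3 := Real.sqrt_pos.2 (by norm_num)
  set s : ℝ := Real.sqrt 3 with hs
  set G : ℝ → ℝ := fun t => (g (ρ + t * Complex.I)).re with hGdef
  have him : ρ.im = s / 2 := by rw [hρ]; simp
  have hdiff : ρ - (starRingEnd ℂ) ρ = (s:ℂ) * Complex.I := by
    rw [Complex.sub_conj, him]; push_cast; ring
  have hsub : ∀ w : ℝ, 0 < w → w < 1 →
      (ρ - (starRingEnd ℂ) ρ * w) / (1 - (w:ℂ)) = ρ + ((s * w / (1 - w) : ℝ) : ℂ) * Complex.I := by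
    intro w hw0 hw1
    have h1w : (1:ℝ) - w ≠ 0 := by linarith
    have h1wc : (1:ℂ) - (w:ℂ) ≠ 0 := by
      simpa using Complex.ofReal_ne_zero.2 h1w
    rw [div_eq_iff h1wc]
    push_cast
    field_simp
    linear_combination (w:ℂ) * hdiff
  have hG : ∀ t : ℝ, 0 < t → g (ρ + t * Complex.I) = ((G t : ℝ) : ℂ) := by
    intro t ht
    apply Complex.ext
    · simp [hGdef]
    · simp [hGdef, hreal t ht]
  -- the B-side function
  set fB : ℝ → ℝ := fun w => (1 - w) ^ (-k) * G (s * w / (1 - w)) with hfBdef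
  have hfB : ∀ w : ℝ, 0 < w → w < 1 → HasSum (fun n => b n * w ^ n) (fB w) := by
    intro w hw0 hw1
    have h1w : (0:ℝ) < 1 - w := by linarith
    have ht : 0 < s * w / (1 - w) := by positivity
    have habsw : ‖(w:ℂ)‖ < 1 := by
      simpa [abs_of_pos hw0] using hw1
    have H := hb (w:ℂ) habsw
    rw [hsub w hw0 hw1, hG _ ht] at H
    have hcast : ((1:ℂ) - (w:ℂ)) ^ (-k) * ((G (s * w / (1 - w)) : ℝ) : ℂ)
        = ((fB w : ℝ) : ℂ) := by
      rw [hfBdef]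
      push_cast
      ring
    rw [hcast] at H
    have H2 : HasSum (fun n : ℕ => ((b n * w ^ n : ℝ) : ℂ)) ((fB w : ℝ) : ℂ) := by
      refine H.congr_fun fun n => ?_
      push_cast
      ring
    exact Complex.hasSum_ofReal.1 H2
  -- the C-side
  have hfC : ∀ t : ℝ, 0 < t → t < r →
      HasSum (fun n => (c n * (-(2 * Real.pi)) ^ n) * t ^ n) (G t) := by
    intro t ht htr
    have hz : ‖(ρ + (t:ℂ) * Complex.I) - ρ‖ < r := by
      rw [add_sub_cancel_left]
      simpa [abs_of_pos ht] using htr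
    have H := hcs (ρ + (t:ℂ) * Complex.I) hz
    rw [hG t ht] at H
    have H2 : HasSum (fun n : ℕ => (((c n * (-(2 * Real.pi)) ^ n) * t ^ n : ℝ) : ℂ))
        ((G t : ℝ) : ℂ) := by
      refine H.congr_fun fun n => ?_
      have he : (2 * (Real.pi:ℂ) * Complex.I) * ((t:ℂ) * Complex.I)
          = ((-(2 * Real.pi) * t : ℝ) : ℂ) := by
        push_cast
        linear_combination (2 * (Real.pi:ℂ) * (t:ℂ)) * Complex.I_sq
      rw [add_sub_cancel_left, mul_assoc ((c n : ℝ) : ℂ), ← mul_pow, he]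
      push_cast
      ring
    exact Complex.hasSum_ofReal.1 H2
  have TB := key_tendsto' b v 1 one_pos fB hfB hb0
  have TC := key_tendsto' (fun n => c n * (-(2 * Real.pi)) ^ n) v r hrpos G hfC
    (fun n hn => by show c n * _ = 0; rw [hc0 n hn, zero_mul])
  set L : ℝ := c v * (-(2 * Real.pi)) ^ v with hL
  have hLne : L ≠ 0 := mul_ne_zero hcv (pow_ne_zero _ (neg_ne_zero.2 (by positivity)))
  -- W
  set W : ℝ → ℝ := fun t => t / (s + t) with hW
  have hWt : Tendsto W (𝓝[>] (0:ℝ)) (𝓝[>] (0:ℝ)) := by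
    rw [tendsto_nhdsWithin_iff]
    constructor
    · have hc1 : ContinuousAt W 0 := by
        apply ContinuousAt.div continuousAt_id (continuousAt_const.add continuousAt_id)
        simpa using hs0.ne'
      have h0 : W 0 = 0 := by simp [hW]
      have := hc1.tendsto
      rw [h0] at this
      exact this.mono_left nhdsWithin_le_nhds
    · filter_upwards [self_mem_nhdsWithin] with t ht
      have ht' : (0:ℝ) < t := ht
      exact div_pos ht' (by positivity)
  have T1 : Tendsto (fun t => fB (W t) / (W t) ^ v) (𝓝[>] (0:ℝ)) (𝓝 (b v)) := TB.comp hWt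
  -- identity
  have hident : ∀ t : ℝ, 0 < t →
      fB (W t) / (W t) ^ v = (1 - W t) ^ (-k) * (G t / t ^ v) * (s + t) ^ v := by
    intro t ht
    have hst : (0:ℝ) < s + t := by positivity
    have hWtv : W t = t / (s + t) := rfl
    have hWlt : W t < 1 := by
      rw [hWtv, div_lt_one hst]; linarith
    have h1W : 1 - W t = s / (s + t) := by
      rw [hWtv]; field_simp; ring
    have harg : s * W t / (1 - W t) = t := by
      rw [hWtv, h1W]
      field_simp
    have htv : t ^ v ≠ 0 := by positivity
    have hstv : (s + t) ^ v ≠ 0 := by positivity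
    simp only [hfBdef]
    rw [harg, show (W t) ^ v = t ^ v / (s + t) ^ v from by rw [hWtv, div_pow]]
    generalize (1 - W t) ^ (-k) = A
    field_simp
  have hWcont : ContinuousAt W 0 := by
    apply ContinuousAt.div continuousAt_id (continuousAt_const.add continuousAt_id)
    simpa using hs0.ne'
  have T2 : Tendsto (fun t => (1 - W t) ^ (-k) * (G t / t ^ v) * (s + t) ^ v)
      (𝓝[>] (0:ℝ)) (𝓝 (1 * L * s ^ v)) := by
    refine Tendsto.mul (Tendsto.mul ?_ TC) ?_
    · have h1 : Tendsto (fun t => 1 - W t) (𝓝[>] (0:ℝ)) (𝓝 1) := by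
        have h0 : W 0 = 0 := by simp [hW]
        have hcont : ContinuousAt (fun t : ℝ => 1 - W t) 0 := continuousAt_const.sub hWcont
        simpa [h0] using hcont.tendsto.mono_left nhdsWithin_le_nhds
      have hzp := ((continuousAt_zpow₀ (1:ℝ) (-k) (Or.inl one_ne_zero)).tendsto).comp h1
      simpa [Function.comp_def] using hzp
    · have : Tendsto (fun t : ℝ => (s + t) ^ v) (𝓝 (0:ℝ)) (𝓝 ((s + 0) ^ v)) :=
        ((continuous_const.add continuous_id).pow v).tendsto 0
      simpa using this.mono_left nhdsWithin_le_nhds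
  have heq : (fun t => fB (W t) / (W t) ^ v) =ᶠ[𝓝[>] (0:ℝ)]
      (fun t => (1 - W t) ^ (-k) * (G t / t ^ v) * (s + t) ^ v) := by
    filter_upwards [self_mem_nhdsWithin] with t ht
    exact hident t ht
  have hbL : b v = 1 * L * s ^ v := tendsto_nhds_unique (T1.congr' heq) T2
  rw [one_mul] at hbL
  have hsign1 : Real.sign (b v) = (-1:ℝ)^v * Real.sign (c v) := by
    have hP : (0:ℝ) < (2*Real.pi)^v * s^v := by positivity
    have hbeq2 : b v = ((2*Real.pi)^v * s^v) * ((-1:ℝ)^v * c v) := by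
      rw [hbL, hL, neg_pow]; ring
    rw [hbeq2, sign_pos_mul' hP]
    rcases Nat.even_or_odd v with hv | hv
    · rw [hv.neg_one_pow, one_mul, one_mul]
    · rw [hv.neg_one_pow, neg_one_mul, neg_one_mul, Real.sign_neg]
  refine ⟨hsign1, ?_⟩
  have hsignbL : Real.sign (b v) = Real.sign L := by
    rw [hbL, mul_comm]; exact sign_pos_mul' (pow_pos hs0 v) L
  have hmem : {x : ℝ | Real.sign x = Real.sign L} ∈ 𝓝 L := by
    rcases hLne.lt_or_gt with h | h
    · exact Filter.mem_of_superset (Iio_mem_nhds h) fun x hx => by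
        simp only [Set.mem_setOf_eq]
        rw [Real.sign_of_neg hx, Real.sign_of_neg h]
    · exact Filter.mem_of_superset (Ioi_mem_nhds h) fun x hx => by
        simp only [Set.mem_setOf_eq]
        rw [Real.sign_of_pos hx, Real.sign_of_pos h]
  have hev : ∀ᶠ t in 𝓝[>] (0:ℝ), Real.sign (b v) = Real.sign (G t) := by
    filter_upwards [self_mem_nhdsWithin, TC.eventually hmem] with t ht hsgn
    have ht' : (0:ℝ) < t := ht
    have htv : (0:ℝ) < t ^ v := pow_pos ht' v
    have hGt : G t = t ^ v * (G t / t ^ v) := by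
      rw [mul_comm, div_mul_cancel₀ _ htv.ne']
    rw [hsignbL, hGt, sign_pos_mul' htv]
    exact hsgn.symm
  exact tendsto_const_nhds.congr' hev
end
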